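/- arXiv:1501.04417 — 2 statements merged into one kernel-verified Lean document; each statement's English description precedes it below -/
import Mathlib

section
/- For every integer n ≥ 2, ∑_{i=0}^{n-2} binom(n-2, i) / binom(3n-4, n-i) = 3 / ((2n-1)(2n-3)). -/
/-! Reciprocal binomial coefficients satisfy the Pascal-type rule
`1 / C(N+1, j+1) + 1 / C(N+1, j) = (N+2) / ((N+1) C(N, j))`. Splitting `C(m+1, i)` by Pascal's
rule and pairing terms with this rule shows that
`S(m) = ∑ᵢ C(m, i) / C(m+a, m-i+b)` satisfies `S(m+1) = (m+a+2)/(m+a+1) · S(m)`, so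
`S(m) = (m+a+1) / ((a+1) C(a, b))`. The theorem is the case `m = n-2`, `a = 2n-2`, `b = 2`. -/

open Finset

variable {K : Type*} [Field K] [CharZero K]

theorem inv_choose_succ_succ_add_inv_choose_succ {N j : ℕ} (h : j ≤ N) :
    ((N + 1).choose (j + 1) : K)⁻¹ + ((N + 1).choose j : K)⁻¹
      = (N + 2) / (N + 1) * (N.choose j : K)⁻¹ := by
  have hA : ((N + 1).choose (j + 1) : K) ≠ 0 := Nat.cast_ne_zero.2 (Nat.choose_pos (by omega)).ne'
  have hB : ((N + 1).choose j : K) ≠ 0 := Nat.cast_ne_zero.2 (Nat.choose_pos (by omega)).ne'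
  have hC : (N.choose j : K) ≠ 0 := Nat.cast_ne_zero.2 (Nat.choose_pos h).ne'
  have e₁ : ((N + 1 : ℕ) : K) * N.choose j = (N + 1).choose (j + 1) * (j + 1 : ℕ) := by
    exact_mod_cast Nat.add_one_mul_choose_eq N j
  have e₂ : (N.choose j : K) * (N + 1 : ℕ) = (N + 1).choose j * (N + 1 - j : ℕ) := by
    exact_mod_cast Nat.choose_mul_succ_eq N j
  rw [Nat.cast_sub (by omega)] at e₂
  push_cast at e₁ e₂
  field_simp
  linear_combination ((N + 1).choose j : K) * e₁ + ((N + 1).choose (j + 1) : K) * e₂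

theorem sum_choose_div_choose_add (a b : ℕ) (hba : b ≤ a) (m : ℕ) :
    ∑ i ∈ range (m + 1), (m.choose i : K) / (m + a).choose (m - i + b)
      = (m + a + 1) / ((a + 1) * a.choose b) := by
  have hC : (a.choose b : K) ≠ 0 := Nat.cast_ne_zero.2 (Nat.choose_pos hba).ne'
  induction m with
  | zero => simp [div_mul_cancel_left₀ (Nat.cast_add_one_ne_zero a : (a + 1 : K) ≠ 0)]
  | succ m ih =>
    have hpair : ∀ i ∈ range (m + 1),
        ((m + 1 + a).choose (m + 1 - i + b) : K)⁻¹ + ((m + 1 + a).choose (m - i + b) : K)⁻¹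
          = (m + a + 2) / (m + a + 1) * ((m + a).choose (m - i + b) : K)⁻¹ := by
      intro i hi
      have hi : i ≤ m := Nat.lt_succ_iff.1 (mem_range.1 hi)
      rw [show m + 1 + a = m + a + 1 by omega, show m + 1 - i + b = m - i + b + 1 by omega,
        inv_choose_succ_succ_add_inv_choose_succ (by omega)]
      push_cast
      ring
    have hma : (m + a + 1 : K) ≠ 0 := by exact_mod_cast Nat.succ_ne_zero (m + a)
    simp only [div_eq_mul_inv] at ih ⊢
    calc ∑ i ∈ range (m + 2), ((m + 1).choose i : K) * ((m + 1 + a).choose (m + 1 - i + b) : K)⁻¹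
        = ∑ i ∈ range (m + 1), (m.choose i : K) * (((m + 1 + a).choose (m + 1 - i + b) : K)⁻¹
            + ((m + 1 + a).choose (m - i + b) : K)⁻¹) := by
          rw [sum_choose_succ_mul (fun _ j ↦ ((m + 1 + a).choose (j + b) : K)⁻¹),
            ← sum_add_distrib]
          simp_rw [mul_add]
      _ = (m + a + 2) / (m + a + 1)
            * ∑ i ∈ range (m + 1), (m.choose i : K) * ((m + a).choose (m - i + b) : K)⁻¹ := by
          rw [mul_sum]
          exact sum_congr rfl fun i hi ↦ by rw [hpair i hi, mul_left_comm]
      _ = (↑(m + 1) + a + 1) * ((a + 1) * a.choose b : K)⁻¹ := by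
          rw [ih]
          push_cast
          field_simp
          ring

/-- For every integer n ≥ 2,
∑_{i=0}^{n-2} binom(n-2,i) / binom(3n-4, n-i) = 3 / ((2n-1)(2n-3)). -/
theorem stmt2 (n : ℕ) (hn : 2 ≤ n) :
    ∑ i ∈ Finset.range (n - 1),
        ((n - 2).choose i : ℚ) / ((3 * n - 4).choose (n - i) : ℚ)
      = 3 / (((2 * n - 1 : ℕ) : ℚ) * ((2 * n - 3 : ℕ) : ℚ)) := by
  obtain ⟨m, rfl⟩ : ∃ m, n = m + 2 := ⟨n - 2, by omega⟩
  have hsum := sum_choose_div_choose_add (K := ℚ) (2 * m + 2) 2 (by omega) m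
  rw [show m + 2 - 1 = m + 1 by omega, show m + 2 - 2 = m by omega,
    show 3 * (m + 2) - 4 = m + (2 * m + 2) by omega, show 2 * (m + 2) - 1 = 2 * m + 3 by omega,
    show 2 * (m + 2) - 3 = 2 * m + 1 by omega,
    sum_congr rfl fun i hi ↦ by rw [show m + 2 - i = m - i + 2 by simp at hi; omega], hsum,
    Nat.cast_choose_two]
  push_cast
  rw [show (2 * m + 2 : ℚ) - 1 = 2 * m + 1 by ring, div_eq_div_iff (by positivity) (by positivity)]
  ring
end

section
/- Let λ be a partition with conjugate λ' having parts λ'_1 ≥ ... ≥ λ'_{n-1}, and let μ be the partition with μ'_i = λ'_i + 1 for 1 ≤ i ≤ n-1 (i.e., μ is λ with one row of length n-1 added on top). Then for any integer N with N ≥ n, ∏_{r ∈ λ} (N - n + 1 + c_λ(r)) / h_λ(r) = (∏_{i=1}^{n-1} (λ'_i + n - i)/(N + 1 - i)) · ∏_{r ∈ μ} (N - n + 2 + c_μ(r)) / h_μ(r), where for a box r = (i,j), c(r) = j - i is the content and h(r) is the hook length. -/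
/-- The boxes (i,j) (0-based row i, column j) of the Young diagram whose column lengths are
given by `c` (with at most `m` columns). -/
def ydBoxes (m : ℕ) (c : ℕ → ℕ) : Finset (ℕ × ℕ) :=
  (Finset.range (c 0) ×ˢ Finset.range m).filter fun p => p.1 < c p.2

/-- Length of row `i` of the diagram with column lengths `c` (at most `m` columns). -/
def ydRow (m : ℕ) (c : ℕ → ℕ) (i : ℕ) : ℕ :=
  ((Finset.range m).filter fun j => i < c j).card

/-- Hook length of the box (i,j) (0-based) of the diagram with column lengths `c`:
λ_i + λ'_j - i - j + 1 in 1-based terms. -/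
def ydHook (m : ℕ) (c : ℕ → ℕ) (i j : ℕ) : ℕ :=
  ydRow m c i + c j - i - j - 1

/-- Product identity for hooks and contents: if λ has conjugate parts λ'₁ ≥ … ≥ λ'_{n-1}
(column lengths `c`) and μ is λ with a row of length n-1 added on top (μ'ᵢ = λ'ᵢ + 1), then
for N ≥ n,
∏_{r∈λ} (N-n+1+c_λ(r))/h_λ(r)
  = (∏_{i=1}^{n-1} (λ'ᵢ+n-i)/(N+1-i)) · ∏_{r∈μ} (N-n+2+c_μ(r))/h_μ(r). -/
theorem stmt10 (n N : ℕ) (hn : 2 ≤ n) (hN : n ≤ N) (c : ℕ → ℕ) (hc : Antitone c)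
    (hc0 : ∀ j, n - 1 ≤ j → c j = 0) (hcpos : ∀ j < n - 1, 1 ≤ c j) :
    ∏ p ∈ ydBoxes (n - 1) c,
        (((N : ℚ) - n + 1 + ((p.2 : ℚ) - (p.1 : ℚ))) / (ydHook (n - 1) c p.1 p.2 : ℚ))
      = (∏ i ∈ Finset.range (n - 1), (((c i : ℚ) + n - 1 - i) / ((N : ℚ) - i))) *
        ∏ p ∈ ydBoxes (n - 1) (fun j => if j < n - 1 then c j + 1 else 0),
          (((N : ℚ) - n + 2 + ((p.2 : ℚ) - (p.1 : ℚ))) /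
            (ydHook (n - 1) (fun j => if j < n - 1 then c j + 1 else 0) p.1 p.2 : ℚ)) := by
  set m := n - 1 with hm
  have hm1 : 1 ≤ m := by omega
  have hmQ : (m : ℚ) = (n : ℚ) - 1 := by
    rw [hm, Nat.cast_sub (by omega), Nat.cast_one]
  set c' : ℕ → ℕ := fun j => if j < m then c j + 1 else 0 with hc'
  have hc'eq : ∀ j < m, c' j = c j + 1 := by
    intro j hj; simp only [hc', if_pos hj]
  have hc'0 : c' 0 = c 0 + 1 := hc'eq 0 hm1
  -- row lengths of μ
  have hrow0 : ydRow m c' 0 = m := by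
    unfold ydRow
    rw [Finset.filter_true_of_mem, Finset.card_range]
    intro j hj
    rw [hc'eq j (Finset.mem_range.mp hj)]; omega
  have hrowS : ∀ i, ydRow m c' (i + 1) = ydRow m c i := by
    intro i
    unfold ydRow
    congr 1
    apply Finset.filter_congr
    intro j hj
    rw [hc'eq j (Finset.mem_range.mp hj)]
    constructor <;> intro h <;> omega
  -- split μ's boxes into the top row and the shifted boxes of λ
  have hsplit : ydBoxes m c' =
      ((Finset.range m).image fun j => ((0 : ℕ), j)) ∪
      ((ydBoxes m c).image fun p => (p.1 + 1, p.2)) := by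
    ext ⟨i, j⟩
    simp only [ydBoxes, Finset.mem_filter, Finset.mem_product, Finset.mem_range,
      Finset.mem_union, Finset.mem_image, Prod.mk.injEq, Prod.exists]
    constructor
    · rintro ⟨⟨hi0, hj⟩, hij⟩
      rw [hc'eq j hj] at hij
      rcases Nat.eq_zero_or_pos i with h | h
      · exact Or.inl ⟨j, hj, h.symm, rfl⟩
      · right
        have hcj0 : c j ≤ c 0 := hc (Nat.zero_le j)
        exact ⟨i - 1, j, ⟨⟨by omega, hj⟩, by omega⟩, by omega, rfl⟩
    · rintro (⟨j', hj', hi, hjj⟩ | ⟨i', j', ⟨⟨hi', hj'⟩, hij'⟩, hi, hj⟩)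
      · subst hjj; subst hi
        rw [hc'0, hc'eq j' hj']
        exact ⟨⟨by omega, hj'⟩, by omega⟩
      · subst hi; subst hj
        rw [hc'0, hc'eq j' hj']
        exact ⟨⟨by omega, hj'⟩, by omega⟩
  have hdisj : Disjoint ((Finset.range m).image fun j => ((0 : ℕ), j))
      ((ydBoxes m c).image fun p => (p.1 + 1, p.2)) := by
    rw [Finset.disjoint_left]
    rintro ⟨i, j⟩ h1 h2
    simp only [Finset.mem_image, Prod.mk.injEq, Prod.exists] at h1 h2
    obtain ⟨j', _, hi, _⟩ := h1
    obtain ⟨i', j'', _, hi', _⟩ := h2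
    omega
  -- hook computations
  have hhook0 : ∀ j < m, ydHook m c' 0 j = m + c j - j := by
    intro j hj
    unfold ydHook
    rw [hrow0, hc'eq j hj]
    omega
  have hhookS : ∀ i j, j < m → ydHook m c' (i + 1) j = ydHook m c i j := by
    intro i j hj
    unfold ydHook
    rw [hrowS, hc'eq j hj]
    omega
  -- rewrite the μ-product
  have hmu : ∏ p ∈ ydBoxes m c',
      (((N : ℚ) - n + 2 + ((p.2 : ℚ) - (p.1 : ℚ))) / (ydHook m c' p.1 p.2 : ℚ))
      = (∏ j ∈ Finset.range m,
          (((N : ℚ) - n + 2 + j) / ((m + c j - j : ℕ) : ℚ))) *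
        ∏ p ∈ ydBoxes m c,
          (((N : ℚ) - n + 1 + ((p.2 : ℚ) - (p.1 : ℚ))) / (ydHook m c p.1 p.2 : ℚ)) := by
    rw [hsplit, Finset.prod_union hdisj, Finset.prod_image (by
        intro a _ b _ h; simpa using h),
      Finset.prod_image (by
        intro a _ b _ h
        simp only [Prod.mk.injEq] at h
        exact Prod.ext (by omega) h.2)]
    congr 1
    · apply Finset.prod_congr rfl
      intro j hj
      rw [hhook0 j (Finset.mem_range.mp hj)]
      norm_num
    · apply Finset.prod_congr rfl
      intro p hp
      simp only [ydBoxes, Finset.mem_filter, Finset.mem_product, Finset.mem_range] at hp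
      rw [hhookS p.1 p.2 hp.1.2]
      push_cast
      ring_nf
  rw [hmu, ← mul_assoc]
  -- the scalar factor is 1
  have key : (∏ i ∈ Finset.range m, (((c i : ℚ) + n - 1 - i) / ((N : ℚ) - i))) *
      (∏ j ∈ Finset.range m, (((N : ℚ) - n + 2 + j) / ((m + c j - j : ℕ) : ℚ))) = 1 := by
    rw [Finset.prod_div_distrib, Finset.prod_div_distrib]
    have h1 : ∏ i ∈ Finset.range m, ((c i : ℚ) + n - 1 - i)
        = ∏ i ∈ Finset.range m, ((m + c i - i : ℕ) : ℚ) := by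
      apply Finset.prod_congr rfl
      intro i hi
      have hi' : i < m := Finset.mem_range.mp hi
      rw [Nat.cast_sub (by omega), Nat.cast_add, hmQ]
      ring
    have h2 : ∏ i ∈ Finset.range m, ((N : ℚ) - n + 2 + i)
        = ∏ i ∈ Finset.range m, ((N : ℚ) - i) := by
      rw [← Finset.prod_range_reflect (fun i => (N : ℚ) - i) m]
      apply Finset.prod_congr rfl
      intro i hi
      have hi' : i < m := Finset.mem_range.mp hi
      have : ((m - 1 - i : ℕ) : ℚ) = (m : ℚ) - 1 - i := by
        rw [Nat.cast_sub (by omega), Nat.cast_sub (by omega), Nat.cast_one]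
      rw [this, hmQ]
      ring
    have hQ1 : ∏ i ∈ Finset.range m, ((N : ℚ) - i) ≠ 0 := by
      rw [Finset.prod_ne_zero_iff]
      intro i hi
      have hi' : i < m := Finset.mem_range.mp hi
      have : (i : ℚ) < N := by exact_mod_cast (by omega : i < N)
      intro h; rw [sub_eq_zero] at h; exact absurd h.symm (ne_of_lt this)
    have hP1 : ∏ i ∈ Finset.range m, ((m + c i - i : ℕ) : ℚ) ≠ 0 := by
      rw [Finset.prod_ne_zero_iff]
      intro i hi
      have hi' : i < m := Finset.mem_range.mp hi
      have := hcpos i hi'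
      exact_mod_cast (by omega : m + c i - i ≠ 0)
    rw [h1, h2]
    field_simp
  rw [key, one_mul]
end
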